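/- Let S be a TCK family generating 𝔖, and let 𝔖_0^k denote the WOT-closed ideal generated by {S_μ : |μ| = k}. If μ is a path with |μ| = n ≤ k, then S_μ* 𝔖_0^k ⊆ 𝔖_0^{k−n} (interpreting 𝔖_0^0 = 𝔖). In particular, every A ∈ 𝔖_0^k can be written A = Σ_{|λ|=k} S_λ A_λ (SOT-convergent) with A_λ = S_λ* A ∈ 𝔖, and this decomposition with A_λ = S_{s(λ)} A_λ is unique. -/

import Mathlib

structure DirectedGraph where
  V : Type
  E : Type
  src : E → V
  rng : E → V

namespace DirectedGraph

/-- Two edges are composable (as in `e₂ e₁`, `e₂` after `e₁`) when `s(e₂) = r(e₁)`. -/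
def Composable (G : DirectedGraph) (a b : G.E) : Prop := G.src a = G.rng b

/-- A list `[eₙ, …, e₁]` of edges is a path when consecutive edges are composable. -/
def IsPathList (G : DirectedGraph) (μ : List G.E) : Prop := List.Chain' G.Composable μ

/-- The path `μ` has source `v` (vacuous for the empty path). -/
def SrcIs (G : DirectedGraph) (μ : List G.E) (v : G.V) : Prop :=
  ∀ e ∈ μ.getLast?, G.src e = v

/-- The path `μ`, regarded as a path with source `v`, has range `w`. -/
def RngIs (G : DirectedGraph) (v : G.V) (μ : List G.E) (w : G.V) : Prop :=
  match μ with
  | [] => v = w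
  | e :: _ => G.rng e = w

/-- `μ` is a path with source `v`. -/
def IsPathAt (G : DirectedGraph) (v : G.V) (μ : List G.E) : Prop :=
  G.IsPathList μ ∧ G.SrcIs μ v

/-- `μ` is a cycle at `v` : a path with source and range `v`. -/
def IsCycleAt (G : DirectedGraph) (v : G.V) (μ : List G.E) : Prop :=
  G.IsPathAt v μ ∧ G.RngIs v μ v

end DirectedGraph

/-- A Toeplitz–Cuntz–Krieger family for the directed graph `G` on the Hilbert space `H`:
pairwise orthogonal projections `Sv v`, partial isometries `Se e` with
`(Se e)* (Se e) = Sv (s e)`, and `∑_{e ∈ F} (Se e)(Se e)* ≤ Sv v` for finite `F ⊆ r⁻¹(v)`. -/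
structure TCKFamily (G : DirectedGraph) (H : Type) [NormedAddCommGroup H]
    [InnerProductSpace ℂ H] [CompleteSpace H] where
  Sv : G.V → H →L[ℂ] H
  Se : G.E → H →L[ℂ] H
  sv_sa : ∀ v, IsSelfAdjoint (Sv v)
  sv_idem : ∀ v, Sv v * Sv v = Sv v
  sv_orth : ∀ v w, v ≠ w → Sv v * Sv w = 0
  se_isom : ∀ e, ContinuousLinearMap.adjoint (Se e) * Se e = Sv (G.src e)
  tck_ineq : ∀ (v : G.V) (F : Finset G.E), (∀ e ∈ F, G.rng e = v) →
    ContinuousLinearMap.IsPositive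
      (Sv v - ∑ e ∈ F, Se e * ContinuousLinearMap.adjoint (Se e))

/-- The operator associated to a path `μ` with source `v`: the product of the edge
operators along `μ`, with the convention that the empty path at `v` gives `Sv v`. -/
noncomputable def pathOp {G : DirectedGraph} {H : Type} [NormedAddCommGroup H]
    [InnerProductSpace ℂ H] [CompleteSpace H]
    (S : TCKFamily G H) (v : G.V) (μ : List G.E) : H →L[ℂ] H :=
  match μ with
  | [] => S.Sv v
  | e :: rest => (((e :: rest)).map S.Se).prod

/-- The closure of a set of operators in the weak operator topology, described
via the basic WOT neighbourhoods. -/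
def wotClosure {H : Type} [NormedAddCommGroup H] [InnerProductSpace ℂ H]
    (A : Set (H →L[ℂ] H)) : Set (H →L[ℂ] H) :=
  {T | ∀ (F : Finset (H × H)) (ε : ℝ), 0 < ε →
    ∃ X ∈ A, ∀ p ∈ F, ‖(@inner ℂ H _ ((T - X) p.1) p.2)‖ < ε}

/-- The (source-annotated) paths of `G` of length `k`. -/
def PathsLen (G : DirectedGraph) (k : ℕ) : Type :=
  {p : G.V × List G.E // G.IsPathAt p.1 p.2 ∧ p.2.length = k}

/-- `𝔖₀ᵏ` : the WOT-closed span of the path operators `S_λ` with `|λ| ≥ k`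
(for `k = 0` this is the free semigroupoid algebra `𝔖` itself). -/
noncomputable def SGAIdeal {H : Type} [NormedAddCommGroup H] [InnerProductSpace ℂ H]
    [CompleteSpace H] {G : DirectedGraph} (S : TCKFamily G H) (k : ℕ) :
    Set (H →L[ℂ] H) :=
  wotClosure (↑(Submodule.span ℂ {T : H →L[ℂ] H |
    ∃ (u : G.V) (lam : List G.E), G.IsPathAt u lam ∧ k ≤ lam.length ∧ T = pathOp S u lam}))

open ContinuousLinearMap
open scoped InnerProductSpace

/-!
For paths of a fixed length the operators `S_λ` are partial isometries with pairwise orthogonal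
ranges: the TCK inequality `S_e S_e* + S_f S_f* ≤ S_v` forces the range projections of distinct
edges to be orthogonal. Consequently `S_μ* S_λ` is `0` unless `λ = μ λ'`, in which case it is
`S_λ'`, so left multiplication by `S_μ*` maps the generators of `𝔖₀ᵏ` into `𝔖₀^{k-n}`, and, being
WOT-continuous, maps `𝔖₀ᵏ` into `𝔖₀^{k-n}`.

Every generator of `𝔖₀ᵏ` factors through some `S_λ` with `|λ| = k`, so a vector killed by all
these `S_λ*` is orthogonal to the range of every `A ∈ 𝔖₀ᵏ`. The range projections `S_λ S_λ*`
being pairwise orthogonal, Bessel's inequality makes `∑ S_λ S_λ* A x` converge, and its limit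
differs from `A x` by such a vector, hence equals `A x`. Applying `S_λ*` to any decomposition
`A x = ∑ S_λ A_λ x` isolates `S_{s(λ)} A_λ x = A_λ x`, which gives uniqueness.
-/

section CStarRing

variable {A : Type*} [NonUnitalNormedRing A] [StarRing A] [CStarRing A] {a : A}

theorem mul_star_mul_self_of_isStarProjection (h : IsStarProjection (star a * a)) :
    a * (star a * a) = a := by
  have hp := h.isIdempotentElem.eq
  have key : star (a * (star a * a) - a) * (a * (star a * a) - a) = 0 := by
    calc star (a * (star a * a) - a) * (a * (star a * a) - a)
        = (star a * a) * (star a * a) * (star a * a) - (star a * a) * (star a * a)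
            - (star a * a) * (star a * a) + star a * a := by
          simp only [star_sub, star_mul, star_star]; noncomm_ring
      _ = 0 := by rw [hp, hp]; abel
  exact sub_eq_zero.mp (CStarRing.star_mul_self_eq_zero_iff _ |>.mp key)

theorem star_mul_self_mul_star_of_isStarProjection (h : IsStarProjection (star a * a)) :
    star a * a * star a = star a := by
  simpa [mul_assoc] using congrArg star (mul_star_mul_self_of_isStarProjection h)

theorem isStarProjection_mul_star_self_of_isStarProjection (h : IsStarProjection (star a * a)) :
    IsStarProjection (a * star a) where
  isSelfAdjoint := IsSelfAdjoint.mul_star_self a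
  isIdempotentElem := by
    rw [IsIdempotentElem, ← mul_assoc, mul_assoc a, mul_star_mul_self_of_isStarProjection h]

end CStarRing

theorem IsStarProjection.sum {R ι : Type*} [NonUnitalSemiring R] [StarRing R] {p : ι → R}
    (hp : ∀ i, IsStarProjection (p i)) (horth : Pairwise fun i j => p i * p j = 0)
    (s : Finset ι) : IsStarProjection (∑ i ∈ s, p i) := by
  classical
  induction s using Finset.induction_on with
  | empty => simp
  | insert i s hi ih =>
    rw [Finset.sum_insert hi]
    refine (hp i).add ih ?_
    rw [Finset.mul_sum]
    exact Finset.sum_eq_zero fun j hj => horth (ne_of_mem_of_not_mem hj hi).symm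

theorem IsStarProjection.mul_eq_zero_of_add_le {A : Type*} [CStarAlgebra A] [PartialOrder A]
    [StarOrderedRing A] {p q r : A} (hp : IsStarProjection p) (hq : IsStarProjection q)
    (hr : IsStarProjection r) (h : p + q ≤ r) : p * q = 0 := by
  have hq_le : q ≤ 1 - p := le_sub_iff_add_le'.mpr (h.trans hr.le_one)
  have := (hq.le_iff_mul_eq_right hp.one_sub).mp hq_le
  rwa [sub_mul, one_mul, sub_eq_self] at this

section HilbertSpace

variable {𝕜 E ι : Type*} [RCLike 𝕜] [NormedAddCommGroup E] [InnerProductSpace 𝕜 E]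
  [CompleteSpace E]

theorem IsStarProjection.norm_sq_apply {p : E →L[𝕜] E} (hp : IsStarProjection p) (z : E) :
    ‖p z‖ ^ 2 = RCLike.re ⟪p z, z⟫_𝕜 := by
  have h : ⟪p z, z⟫_𝕜 = ⟪p z, p z⟫_𝕜 := by
    conv_lhs => rw [← hp.isIdempotentElem.eq, mul_apply_eq_comp, ← adjoint_inner_right,
      ← star_eq_adjoint, hp.isSelfAdjoint.star_eq]
  rw [h, inner_self_eq_norm_sq]

theorem summable_apply_of_isStarProjection {P : ι → E →L[𝕜] E}
    (hP : ∀ i, IsStarProjection (P i)) (horth : Pairwise fun i j => P i * P j = 0) (z : E) :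
    Summable fun i => P i z := by
  have hpyth : ∀ s : Finset ι, ‖∑ i ∈ s, P i z‖ ^ 2 = ∑ i ∈ s, ‖P i z‖ ^ 2 := fun s => by
    rw [← sum_apply, (IsStarProjection.sum hP horth s).norm_sq_apply, sum_apply, sum_inner,
      map_sum]
    exact Finset.sum_congr rfl fun i _ => ((hP i).norm_sq_apply z).symm
  have hbessel : ∀ s : Finset ι, ∑ i ∈ s, ‖P i z‖ ^ 2 ≤ ‖z‖ ^ 2 := fun s => by
    rw [← hpyth, ← sum_apply]
    gcongr
    exact (le_opNorm _ z).trans <| mul_le_of_le_one_left (norm_nonneg z)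
      (IsStarProjection.norm_le _ (IsStarProjection.sum hP horth s))
  have hsq : Summable fun i => ‖P i z‖ ^ 2 :=
    summable_of_sum_le (fun i => sq_nonneg _) hbessel
  refine summable_iff_vanishing_norm.mpr fun ε hε => ?_
  obtain ⟨s, hs⟩ := summable_iff_vanishing_norm.mp hsq (ε ^ 2) (by positivity)
  refine ⟨s, fun t ht => lt_of_pow_lt_pow_left₀ 2 hε.le ?_⟩
  rw [hpyth]
  exact (le_abs_self _).trans_lt (hs t ht)

variable {T : ι → E →L[𝕜] E}

theorem star_apply_eq_of_hasSum (horth : Pairwise fun i j => star (T i) * T j = 0)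
    {u : ι → E} {z : E} (hsum : HasSum (fun i => T i (u i)) z) (j : ι) :
    star (T j) z = star (T j) (T j (u j)) := by
  refine (hsum.mapL (star (T j))).unique (hasSum_single j fun i hij => ?_)
  rw [← mul_apply_eq_comp, horth hij.symm, zero_apply]

theorem hasSum_apply_star_apply (hT : ∀ i, IsStarProjection (star (T i) * T i))
    (horth : Pairwise fun i j => star (T i) * T j = 0) {z : E}
    (hz : ∀ y, (∀ i, star (T i) y = 0) → ⟪y, z⟫_𝕜 = 0) :
    HasSum (fun i => T i (star (T i) z)) z := by
  have hP : ∀ i, IsStarProjection (T i * star (T i)) := fun i =>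
    isStarProjection_mul_star_self_of_isStarProjection (hT i)
  have hPorth : Pairwise fun i j => T i * star (T i) * (T j * star (T j)) = 0 := fun i j hij => by
    dsimp only
    rw [mul_assoc, ← mul_assoc (star (T i)), horth hij, zero_mul, mul_zero]
  obtain ⟨z', hz'⟩ := summable_apply_of_isStarProjection hP hPorth z
  replace hz' : HasSum (fun i => T i (star (T i) z)) z' := hz'
  have hres : ∀ i, star (T i) (z - z') = 0 := fun i => by
    rw [map_sub, star_apply_eq_of_hasSum horth hz' i, ← mul_apply_eq_comp, ← mul_apply_eq_comp,
      star_mul_self_mul_star_of_isStarProjection (hT i), sub_self]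
  have horth_z' : ⟪z - z', z'⟫_𝕜 = 0 := by
    refine (hz'.mapL (innerSL 𝕜 (z - z'))).unique ?_
    convert hasSum_zero with i
    rw [innerSL_apply_apply, ← adjoint_inner_left, ← star_eq_adjoint, hres,
      inner_zero_left]
  have hzero : ⟪z - z', z - z'⟫_𝕜 = 0 := by
    rw [inner_sub_right, hz _ hres, horth_z', sub_zero]
  rwa [← sub_eq_zero.mp (inner_self_eq_zero.mp hzero)] at hz'

end HilbertSpace

section WOT

variable {H : Type} [NormedAddCommGroup H] [InnerProductSpace ℂ H]

theorem mul_mem_wotClosure [CompleteSpace H] {W W' : Set (H →L[ℂ] H)} {T A : H →L[ℂ] H}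
    (hA : A ∈ wotClosure W) (hW : ∀ X ∈ W, T * X ∈ W') : T * A ∈ wotClosure W' := by
  classical
  intro F ε hε
  obtain ⟨X, hX, hclose⟩ := hA (F.image fun p => (p.1, adjoint T p.2)) ε hε
  refine ⟨T * X, hW X hX, fun p hp => ?_⟩
  rw [← mul_sub, mul_apply_eq_comp, ← adjoint_inner_right]
  exact hclose _ (Finset.mem_image_of_mem _ hp)

theorem inner_apply_eq_zero_of_mem_wotClosure {W : Set (H →L[ℂ] H)} {A : H →L[ℂ] H}
    (hA : A ∈ wotClosure W) {x y : H} (hW : ∀ X ∈ W, ⟪y, X x⟫_ℂ = 0) : ⟪y, A x⟫_ℂ = 0 := by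
  by_contra hne
  obtain ⟨X, hX, hclose⟩ := hA {(x, y)} ‖⟪y, A x⟫_ℂ‖ (norm_pos_iff.mpr hne)
  have h := hclose (x, y) (Finset.mem_singleton_self _)
  dsimp only at h
  rw [sub_apply, inner_sub_left, ← inner_conj_symm (X x), hW X hX, map_zero, sub_zero,
    ← inner_conj_symm, RCLike.norm_conj] at h
  exact lt_irrefl _ h

end WOT

namespace DirectedGraph

variable {G : DirectedGraph} {u v w x : G.V} {e : G.E} {μ ν : List G.E}

theorem isPathList_nil : G.IsPathList [] := List.isChain_nil

theorem isPathList_singleton (e : G.E) : G.IsPathList [e] := List.isChain_singleton e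

theorem isPathList_cons_cons {f : G.E} :
    G.IsPathList (e :: f :: μ) ↔ G.Composable e f ∧ G.IsPathList (f :: μ) :=
  List.isChain_cons_cons

theorem isPathAt_nil (v : G.V) : G.IsPathAt v [] :=
  ⟨isPathList_nil, fun _ he => by simp at he⟩

theorem isPathAt_cons : G.IsPathAt v (e :: μ) ↔ G.IsPathAt v μ ∧ G.RngIs v μ (G.src e) := by
  cases μ with
  | nil => simp [IsPathAt, isPathList_nil, isPathList_singleton, SrcIs, RngIs, eq_comm]
  | cons f μ =>
    simp [IsPathAt, isPathList_cons_cons, SrcIs, RngIs, Composable]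
    tauto

theorem exists_rngIs (v : G.V) (μ : List G.E) : ∃ w, G.RngIs v μ w := by
  cases μ with
  | nil => exact ⟨v, rfl⟩
  | cons e μ => exact ⟨G.rng e, rfl⟩

theorem rngIs_append (hw : G.RngIs u ν w) : G.RngIs u (μ ++ ν) x ↔ G.RngIs w μ x := by
  cases μ with
  | nil => cases ν <;> simp_all [RngIs]
  | cons e μ => rfl

theorem isPathAt_append (hw : G.RngIs u ν w) :
    G.IsPathAt u (μ ++ ν) ↔ G.IsPathAt w μ ∧ G.IsPathAt u ν := by
  induction μ with
  | nil => simp [isPathAt_nil]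
  | cons e μ ih =>
    rw [List.cons_append, isPathAt_cons, isPathAt_cons, ih, rngIs_append hw]
    tauto

end DirectedGraph

namespace TCKFamily

open DirectedGraph

variable {H : Type} [NormedAddCommGroup H] [InnerProductSpace ℂ H] [CompleteSpace H]
  {G : DirectedGraph} (S : TCKFamily G H)

theorem isStarProjection_sv (v : G.V) : IsStarProjection (S.Sv v) :=
  ⟨S.sv_idem v, S.sv_sa v⟩

theorem star_se_mul_se (e : G.E) : star (S.Se e) * S.Se e = S.Sv (G.src e) :=
  S.se_isom e

theorem isStarProjection_star_se_mul_se (e : G.E) :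
    IsStarProjection (star (S.Se e) * S.Se e) := by
  rw [star_se_mul_se]; exact S.isStarProjection_sv _

theorem isStarProjection_se_mul_star (e : G.E) : IsStarProjection (S.Se e * star (S.Se e)) :=
  isStarProjection_mul_star_self_of_isStarProjection (S.isStarProjection_star_se_mul_se e)

theorem se_mul_sv_src (e : G.E) : S.Se e * S.Sv (G.src e) = S.Se e := by
  rw [← star_se_mul_se]
  exact mul_star_mul_self_of_isStarProjection (S.isStarProjection_star_se_mul_se e)

theorem sum_se_mul_star_le_sv {v : G.V} {F : Finset G.E} (hF : ∀ e ∈ F, G.rng e = v) :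
    ∑ e ∈ F, S.Se e * star (S.Se e) ≤ S.Sv v :=
  (le_def _ _).mpr (S.tck_ineq v F hF)

theorem sv_rng_mul_se (e : G.E) : S.Sv (G.rng e) * S.Se e = S.Se e := by
  have hle : S.Se e * star (S.Se e) ≤ S.Sv (G.rng e) := by
    simpa using S.sum_se_mul_star_le_sv (F := {e}) (by simp)
  have h := congrArg (· * S.Se e)
    (((S.isStarProjection_se_mul_star e).le_iff_mul_eq_right (S.isStarProjection_sv _)).mp hle)
  simp only [mul_assoc] at h
  rwa [star_se_mul_se, se_mul_sv_src] at h

theorem star_se_mul_se_of_ne {e f : G.E} (hef : e ≠ f) : star (S.Se e) * S.Se f = 0 := by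
  by_cases hr : G.rng e = G.rng f
  · classical
    have hle : S.Se e * star (S.Se e) + S.Se f * star (S.Se f) ≤ S.Sv (G.rng e) := by
      simpa [Finset.sum_pair hef] using S.sum_se_mul_star_le_sv (F := {e, f}) (by simp [hr])
    have h := (S.isStarProjection_se_mul_star e).mul_eq_zero_of_add_le
      (S.isStarProjection_se_mul_star f) (S.isStarProjection_sv _) hle
    calc star (S.Se e) * S.Se f
        = star (S.Se e) * S.Se e * star (S.Se e) * (S.Se f * S.Sv (G.src f)) := by
          rw [star_mul_self_mul_star_of_isStarProjection (S.isStarProjection_star_se_mul_se e),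
            se_mul_sv_src]
      _ = star (S.Se e) * (S.Se e * star (S.Se e) * (S.Se f * star (S.Se f))) * S.Se f := by
          rw [← star_se_mul_se]; noncomm_ring
      _ = 0 := by rw [h, mul_zero, zero_mul]
  · rw [← sv_rng_mul_se S e, ← sv_rng_mul_se S f, star_mul, (S.sv_sa _).star_eq, mul_assoc,
      ← mul_assoc (S.Sv _), S.sv_orth _ _ hr, zero_mul, mul_zero]

variable {S} {u v w : G.V} {e : G.E} {μ ν : List G.E}

theorem pathOp_cons (h : G.IsPathAt v (e :: μ)) : pathOp S v (e :: μ) = S.Se e * pathOp S v μ := by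
  cases μ with
  | nil =>
    have hv : G.src e = v := h.2 e rfl
    simp [pathOp, ← hv, se_mul_sv_src]
  | cons f μ => simp [pathOp]

theorem sv_mul_pathOp (h : G.IsPathAt u ν) (hw : G.RngIs u ν w) :
    S.Sv w * pathOp S u ν = pathOp S u ν := by
  cases ν with
  | nil => cases hw; exact S.sv_idem u
  | cons e ν => rw [pathOp_cons h, ← mul_assoc, ← hw, sv_rng_mul_se]

theorem star_pathOp_mul_self (h : G.IsPathAt v μ) :
    star (pathOp S v μ) * pathOp S v μ = S.Sv v := by
  induction μ with
  | nil => rw [pathOp, (S.sv_sa v).star_eq, S.sv_idem]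
  | cons e μ ih =>
    obtain ⟨hμ, hrng⟩ := isPathAt_cons.mp h
    rw [pathOp_cons h, star_mul, mul_assoc, ← mul_assoc (star (S.Se e)), star_se_mul_se,
      sv_mul_pathOp hμ hrng, ih hμ]

theorem star_pathOp_mul_pathOp_of_ne (hμ : G.IsPathAt v μ) (hν : G.IsPathAt w ν)
    (hlen : μ.length = ν.length) (hne : (v, μ) ≠ (w, ν)) :
    star (pathOp S v μ) * pathOp S w ν = 0 := by
  induction μ generalizing ν with
  | nil =>
    obtain rfl : ν = [] := List.length_eq_zero_iff.mp hlen.symm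
    rw [pathOp, pathOp, (S.sv_sa v).star_eq]
    exact S.sv_orth v w (by simpa using hne)
  | cons e μ ih =>
    obtain ⟨f, ν, rfl⟩ := List.exists_cons_of_length_eq_add_one hlen.symm
    obtain ⟨hμ', -⟩ := isPathAt_cons.mp hμ
    obtain ⟨hν', hrng⟩ := isPathAt_cons.mp hν
    rw [pathOp_cons hμ, pathOp_cons hν, star_mul, mul_assoc, ← mul_assoc (star (S.Se e))]
    by_cases hef : e = f
    · subst hef
      rw [star_se_mul_se, sv_mul_pathOp hν' hrng,
        ih hμ' hν' (by simpa using hlen) (by simpa using hne)]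
    · rw [S.star_se_mul_se_of_ne hef, zero_mul, mul_zero]

theorem pathOp_append (h : G.IsPathAt u (μ ++ ν)) (hw : G.RngIs u ν w) :
    pathOp S u (μ ++ ν) = pathOp S w μ * pathOp S u ν := by
  induction μ with
  | nil => exact (sv_mul_pathOp h hw).symm
  | cons e μ ih =>
    have hμ := ((isPathAt_append hw).mp h).1
    rw [List.cons_append] at h ⊢
    rw [pathOp_cons h, ih (isPathAt_cons.mp h).1, ← mul_assoc, pathOp_cons hμ]

def pathOpsLengthGE (S : TCKFamily G H) (k : ℕ) : Set (H →L[ℂ] H) :=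
  {T | ∃ (u : G.V) (lam : List G.E), G.IsPathAt u lam ∧ k ≤ lam.length ∧ T = pathOp S u lam}

variable {lam : List G.E} {k n : ℕ}

theorem exists_pathOp_eq_mul_take_drop (h : G.IsPathAt u lam) (n : ℕ) :
    ∃ w, G.IsPathAt w (lam.take n) ∧ G.IsPathAt u (lam.drop n) ∧ G.RngIs u (lam.drop n) w ∧
      pathOp S u lam = pathOp S w (lam.take n) * pathOp S u (lam.drop n) := by
  obtain ⟨w, hw⟩ := exists_rngIs u (lam.drop n)
  rw [← List.take_append_drop n lam] at h
  obtain ⟨htake, hdrop⟩ := (isPathAt_append hw).mp h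
  refine ⟨w, htake, hdrop, hw, ?_⟩
  conv_lhs => rw [← List.take_append_drop n lam]
  exact pathOp_append h hw

theorem star_pathOp_mul_mem_span (hnk : n ≤ k) (hμ : G.IsPathAt v μ) (hμn : μ.length = n)
    {T : H →L[ℂ] H} (hT : T ∈ S.pathOpsLengthGE k) :
    star (pathOp S v μ) * T ∈ Submodule.span ℂ (S.pathOpsLengthGE (k - n)) := by
  obtain ⟨u, lam, hlam, hk, rfl⟩ := hT
  obtain ⟨w, htake, hdrop, hw, hsplit⟩ := exists_pathOp_eq_mul_take_drop (S := S) hlam n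
  rw [hsplit, ← mul_assoc]
  by_cases hμw : (v, μ) = (w, lam.take n)
  · obtain ⟨rfl, rfl⟩ := Prod.mk.inj hμw
    rw [star_pathOp_mul_self hμ, sv_mul_pathOp hdrop hw]
    exact Submodule.subset_span ⟨u, lam.drop n, hdrop, by simp; omega, rfl⟩
  · rw [star_pathOp_mul_pathOp_of_ne hμ htake (by simp; omega) hμw, zero_mul]
    exact Submodule.zero_mem _

theorem star_pathOp_mul_mem_SGAIdeal (hnk : n ≤ k) (hμ : G.IsPathAt v μ) (hμn : μ.length = n)
    {A : H →L[ℂ] H} (hA : A ∈ SGAIdeal S k) : star (pathOp S v μ) * A ∈ SGAIdeal S (k - n) := by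
  have hspan : Submodule.span ℂ (S.pathOpsLengthGE k) ≤
      (Submodule.span ℂ (S.pathOpsLengthGE (k - n))).comap
        (LinearMap.mulLeft ℂ (star (pathOp S v μ))) :=
    Submodule.span_le.mpr fun T hT => star_pathOp_mul_mem_span hnk hμ hμn hT
  exact mul_mem_wotClosure hA fun X hX => hspan hX

theorem pairwise_star_pathOp_mul_pathOp_eq_zero :
    Pairwise fun p q : PathsLen G k => star (pathOp S p.1.1 p.1.2) * pathOp S q.1.1 q.1.2 = 0 :=
  fun p q hpq => star_pathOp_mul_pathOp_of_ne p.2.1 q.2.1 (p.2.2.trans q.2.2.symm)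
    fun h => hpq (Subtype.ext h)

theorem inner_apply_eq_zero_of_mem_SGAIdeal {A : H →L[ℂ] H} (hA : A ∈ SGAIdeal S k) {y : H}
    (hy : ∀ p : PathsLen G k, star (pathOp S p.1.1 p.1.2) y = 0) (x : H) : ⟪y, A x⟫_ℂ = 0 := by
  refine inner_apply_eq_zero_of_mem_wotClosure hA fun X hX => ?_
  have hspan : Submodule.span ℂ (S.pathOpsLengthGE k) ≤
      LinearMap.ker ((innerSL ℂ y).comp (apply ℂ H x) : (H →L[ℂ] H) →ₗ[ℂ] ℂ) := by
    refine Submodule.span_le.mpr ?_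
    rintro _ ⟨u, lam, hlam, hk, rfl⟩
    obtain ⟨w, htake, -, -, hsplit⟩ := exists_pathOp_eq_mul_take_drop (S := S) hlam k
    have hp := hy ⟨(w, lam.take k), htake, by simpa using hk⟩
    simp only [SetLike.mem_coe, LinearMap.mem_ker, ContinuousLinearMap.coe_coe, comp_apply,
      apply_apply, innerSL_apply_apply, hsplit, mul_apply_eq_comp]
    rw [← adjoint_inner_left, ← star_eq_adjoint, hp, inner_zero_left]
  simpa using hspan hX

theorem hasSum_pathOp_star_pathOp_apply {A : H →L[ℂ] H} (hA : A ∈ SGAIdeal S k) (x : H) :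
    HasSum (fun p : PathsLen G k => pathOp S p.1.1 p.1.2 (star (pathOp S p.1.1 p.1.2) (A x)))
      (A x) :=
  hasSum_apply_star_apply
    (fun p => by rw [star_pathOp_mul_self p.2.1]; exact S.isStarProjection_sv _)
    pairwise_star_pathOp_mul_pathOp_eq_zero
    fun _ hy => inner_apply_eq_zero_of_mem_SGAIdeal hA hy x

theorem eq_star_pathOp_mul_of_hasSum {A : H →L[ℂ] H} {B : PathsLen G k → H →L[ℂ] H}
    (hB : ∀ p, S.Sv p.1.1 * B p = B p)
    (hsum : ∀ x, HasSum (fun p : PathsLen G k => pathOp S p.1.1 p.1.2 (B p x)) (A x))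
    (p : PathsLen G k) : B p = star (pathOp S p.1.1 p.1.2) * A := by
  ext x
  rw [mul_apply_eq_comp, star_apply_eq_of_hasSum pairwise_star_pathOp_mul_pathOp_eq_zero (hsum x),
    ← mul_apply_eq_comp, star_pathOp_mul_self p.2.1, ← mul_apply_eq_comp, hB]

end TCKFamily

theorem stmt8_general {H : Type} [NormedAddCommGroup H] [InnerProductSpace ℂ H] [CompleteSpace H]
    (G : DirectedGraph) (S : TCKFamily G H)
    (k n : ℕ) (hnk : n ≤ k) :
    (∀ (v : G.V) (μ : List G.E), G.IsPathAt v μ → μ.length = n →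
      ∀ A ∈ SGAIdeal S k,
        ContinuousLinearMap.adjoint (pathOp S v μ) * A ∈ SGAIdeal S (k - n)) ∧
    (∀ A ∈ SGAIdeal S k,
      (∀ p : PathsLen G k,
        ContinuousLinearMap.adjoint (pathOp S p.1.1 p.1.2) * A ∈ SGAIdeal S 0) ∧
      (∀ x : H, HasSum (fun p : PathsLen G k =>
        pathOp S p.1.1 p.1.2
          ((ContinuousLinearMap.adjoint (pathOp S p.1.1 p.1.2) * A) x)) (A x)) ∧
      (∀ B : PathsLen G k → H →L[ℂ] H,
        (∀ p, S.Sv p.1.1 * B p = B p) →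
        (∀ x : H, HasSum (fun p : PathsLen G k => pathOp S p.1.1 p.1.2 (B p x)) (A x)) →
        ∀ p, B p = ContinuousLinearMap.adjoint (pathOp S p.1.1 p.1.2) * A)) := by
  simp only [← star_eq_adjoint]
  refine ⟨fun v μ hμ hμn A hA => TCKFamily.star_pathOp_mul_mem_SGAIdeal hnk hμ hμn hA,
    fun A hA => ⟨fun p => ?_, TCKFamily.hasSum_pathOp_star_pathOp_apply hA,
      fun B hB hsum => TCKFamily.eq_star_pathOp_mul_of_hasSum hB hsum⟩⟩
  simpa using TCKFamily.star_pathOp_mul_mem_SGAIdeal le_rfl p.2.1 p.2.2 hA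

/-- For a nondegenerate TCK family `S` and `n ≤ k`:
`S_μ* 𝔖₀ᵏ ⊆ 𝔖₀^{k−n}` for every path `μ` with `|μ| = n`.  In particular every
`A ∈ 𝔖₀ᵏ` can be written as the SOT-convergent sum `A = ∑_{|λ|=k} S_λ A_λ` with
`A_λ = S_λ* A ∈ 𝔖`, and this decomposition subject to `A_λ = S_{s(λ)} A_λ` is
unique. -/
theorem stmt8 {H : Type} [NormedAddCommGroup H] [InnerProductSpace ℂ H] [CompleteSpace H]
    (G : DirectedGraph) (S : TCKFamily G H)
    (hnd : ∀ x : H, (∀ v, S.Sv v x = 0) → x = 0)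
    (k n : ℕ) (hnk : n ≤ k) :
    (∀ (v : G.V) (μ : List G.E), G.IsPathAt v μ → μ.length = n →
      ∀ A ∈ SGAIdeal S k,
        ContinuousLinearMap.adjoint (pathOp S v μ) * A ∈ SGAIdeal S (k - n)) ∧
    (∀ A ∈ SGAIdeal S k,
      (∀ p : PathsLen G k,
        ContinuousLinearMap.adjoint (pathOp S p.1.1 p.1.2) * A ∈ SGAIdeal S 0) ∧
      (∀ x : H, HasSum (fun p : PathsLen G k =>
        pathOp S p.1.1 p.1.2
          ((ContinuousLinearMap.adjoint (pathOp S p.1.1 p.1.2) * A) x)) (A x)) ∧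
      (∀ B : PathsLen G k → H →L[ℂ] H,
        (∀ p, S.Sv p.1.1 * B p = B p) →
        (∀ x : H, HasSum (fun p : PathsLen G k => pathOp S p.1.1 p.1.2 (B p x)) (A x)) →
        ∀ p, B p = ContinuousLinearMap.adjoint (pathOp S p.1.1 p.1.2) * A)) :=
  stmt8_general G S k n hnk
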